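/- arXiv:1906.07053 — 2 statements merged into one kernel-verified Lean document; each statement's English description precedes it below -/
import Mathlib

section
/- Let X be a spectral space whose specialization order is a total order, and let Y ⊆ X be nonempty. Then the closure of Y in the constructible topology equals Y_∞ ∪ Y_(∞), where Y_∞ is the set of suprema of nonempty subsets of Y and Y_(∞) is the set of infima of nonempty subsets of Y. In particular, Y is closed in the constructible topology if and only if the supremum and infimum of every nonempty subset of Y belong to Y. -/
open Set TopologicalSpace

/-- A topology `t` on `X` makes `X` a spectral space: quasi-compact, `T0`, sober, with a basis
of quasi-compact open sets closed under finite (binary) intersections. -/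
def IsSpectral (X : Type*) (t : TopologicalSpace X) : Prop :=
  @CompactSpace X t ∧ @T0Space X t ∧ @QuasiSober X t ∧
    ∃ B : Set (Set X),
      (∀ s ∈ B, @IsCompact X t s ∧ @IsOpen X t s) ∧
      (∀ s ∈ B, ∀ u ∈ B, s ∩ u ∈ B) ∧
      @TopologicalSpace.IsTopologicalBasis X t B

/-- The specialization order of a topology: `x ≤ y` iff `y ∈ closure {x}`. -/
def specLE {X : Type*} (t : TopologicalSpace X) (x y : X) : Prop := y ∈ @closure X t {x}

/-- `b` is the supremum of `S` with respect to the specialization order of `t`. -/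
def IsSupSpec {X : Type*} (t : TopologicalSpace X) (S : Set X) (b : X) : Prop :=
  (∀ x ∈ S, specLE t x b) ∧ ∀ c, (∀ x ∈ S, specLE t x c) → specLE t b c

/-- `b` is the infimum of `S` with respect to the specialization order of `t`. -/
def IsInfSpec {X : Type*} (t : TopologicalSpace X) (S : Set X) (b : X) : Prop :=
  (∀ x ∈ S, specLE t b x) ∧ ∀ c, (∀ x ∈ S, specLE t c x) → specLE t c b

/-- The constructible (patch) topology associated to a topology `t`: the coarsest topology in
which all quasi-compact `t`-open sets are clopen. -/
def patchOf {X : Type*} (t : TopologicalSpace X) : TopologicalSpace X :=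
  TopologicalSpace.generateFrom
    {s : Set X | (@IsCompact X t s ∧ @IsOpen X t s) ∨ (@IsCompact X t sᶜ ∧ @IsOpen X t sᶜ)}

/-- Closure with respect to the constructible (patch) topology of `t`. -/
def patchClosure {X : Type*} (t : TopologicalSpace X) (Y : Set X) : Set X :=
  @closure X (patchOf t) Y

/-!
Because the specialization order is total, every nonempty closed set is irreducible, so by
sobriety it has a generic point, its least element. Thus the infimum of `Z` is the generic point
of `closure Z`, and the supremum is the generic point of the closed set of upper bounds, which is
nonempty by quasi-compactness.

A supremum `x` of `Z ⊆ Y` is a constructible limit of the final segments of `Z`: a compact open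
set missing `x` cannot contain cofinally many points of `Z`. Dually for infima, where the
relevant point is that `x` lies in `closure Z`. Conversely, if `x` is neither, then the
supremum of `{y ∈ Y | y ≤ x}` and the infimum of `{y ∈ Y | x ≤ y}` differ from `x`, so there are
compact open sets `U ∋ x` and `W ∌ x` with `U \ W` disjoint from `Y`.
-/

open Filter Topology

section FinalSegments

variable {X : Type*}

def finalSegments (r : X → X → Prop) (Z : Set X) : Filter X := ⨅ z : Z, 𝓟 {y ∈ Z | r z y}

lemma mem_finalSegments {r : X → X → Prop} {Z s : Set X} {z : X} (hz : z ∈ Z)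
    (hs : {y ∈ Z | r z y} ⊆ s) : s ∈ finalSegments r Z :=
  mem_iInf_of_mem ⟨z, hz⟩ (mem_principal.2 hs)

lemma finalSegments_neBot {r : X → X → Prop} [IsPreorder X r] {Z : Set X}
    (hZ : IsChain r Z) (hne : Z.Nonempty) : (finalSegments r Z).NeBot := by
  have : Nonempty Z := hne.to_subtype
  refine iInf_neBot_of_directed' (fun a b => ?_) fun z => principal_neBot_iff.2 ⟨z, z.2, refl _⟩
  rcases hZ.total a.2 b.2 with h | h
  · exact ⟨b, principal_mono.2 fun y hy => ⟨hy.1, _root_.trans h hy.2⟩, le_rfl⟩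
  · exact ⟨a, le_rfl, principal_mono.2 fun y hy => ⟨hy.1, _root_.trans h hy.2⟩⟩

end FinalSegments

section Specialization

variable {X : Type*} [t : TopologicalSpace X]

lemma specLE_iff_specializes {x y : X} : specLE t x y ↔ x ⤳ y :=
  specializes_iff_mem_closure.symm

lemma isSupSpec_iff {Z : Set X} {b : X} :
    IsSupSpec t Z b ↔ (∀ z ∈ Z, z ⤳ b) ∧ ∀ c, (∀ z ∈ Z, z ⤳ c) → b ⤳ c := by
  simp only [IsSupSpec, specLE_iff_specializes]

lemma isInfSpec_iff {Z : Set X} {b : X} :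
    IsInfSpec t Z b ↔ (∀ z ∈ Z, b ⤳ z) ∧ ∀ c, (∀ z ∈ Z, c ⤳ z) → c ⤳ b := by
  simp only [IsInfSpec, specLE_iff_specializes]

lemma IsSupSpec.eq [T0Space X] {Z : Set X} {a b : X} (ha : IsSupSpec t Z a)
    (hb : IsSupSpec t Z b) : a = b := by
  rw [isSupSpec_iff] at ha hb
  exact ((ha.2 b hb.1).antisymm (hb.2 a ha.1)).eq

lemma IsInfSpec.eq [T0Space X] {Z : Set X} {a b : X} (ha : IsInfSpec t Z a)
    (hb : IsInfSpec t Z b) : a = b := by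
  rw [isInfSpec_iff] at ha hb
  exact ((hb.2 a ha.1).antisymm (ha.2 b hb.1)).eq

instance : IsPreorder X (· ⤳ ·) where
  refl _ := specializes_rfl
  trans _ _ _ := Specializes.trans

lemma isIrreducible_of_isChain {Z : Set X} (hZ : IsChain (· ⤳ ·) Z) (hne : Z.Nonempty) :
    IsIrreducible Z := by
  refine ⟨hne, fun u v hu hv ⟨a, haZ, hau⟩ ⟨b, hbZ, hbv⟩ => ?_⟩
  rcases hZ.total haZ hbZ with h | h
  · exact ⟨a, haZ, hau, h.mem_open hv hbv⟩
  · exact ⟨b, hbZ, h.mem_open hu hau, hbv⟩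

lemma IsCompact.exists_mem_forall_specializes {K Z : Set X} (hK : IsCompact K)
    (hZ : IsChain (· ⤳ ·) Z) (hZK : Z ⊆ K) (hne : Z.Nonempty) :
    ∃ y ∈ K, ∀ z ∈ Z, z ⤳ y := by
  have : Nonempty Z := hne.to_subtype
  by_contra! h
  have hempty : K ∩ ⋂ z : Z, closure {(z : X)} = ∅ := by
    refine eq_empty_of_forall_notMem fun y ⟨hyK, hy⟩ => ?_
    obtain ⟨z, hz, hzy⟩ := h y hyK
    exact hzy (specializes_iff_mem_closure.2 (mem_iInter.1 hy ⟨z, hz⟩))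
  have hdir : Directed (· ⊇ ·) fun z : Z => closure {(z : X)} := fun a b =>
    (hZ.total a.2 b.2).elim (fun h => ⟨b, h.closure_subset, subset_rfl⟩)
      fun h => ⟨a, subset_rfl, h.closure_subset⟩
  obtain ⟨z, hz⟩ := hK.elim_directed_family_closed _ (fun _ => isClosed_closure) hempty hdir
  exact (eq_empty_iff_forall_notMem.1 hz) z ⟨hZK z.2, subset_closure rfl⟩

lemma IsGenericPoint.isInfSpec {Z : Set X} {g : X} (hg : IsGenericPoint g (closure Z)) :
    IsInfSpec t Z g := by
  refine isInfSpec_iff.2 ⟨fun z hz => hg.specializes (subset_closure hz), fun c hc => ?_⟩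
  have hZc : Z ⊆ closure {c} := fun z hz => specializes_iff_mem_closure.1 (hc z hz)
  exact specializes_iff_mem_closure.2 (closure_minimal hZc isClosed_closure hg.mem)

section QuasiSober

variable [QuasiSober X]

lemma exists_isInfSpec {Z : Set X} (hZ : IsChain (· ⤳ ·) Z) (hne : Z.Nonempty) :
    ∃ b, IsInfSpec t Z b :=
  let hirr := isIrreducible_of_isChain hZ hne
  ⟨_, hirr.isGenericPoint_genericPoint_closure.isInfSpec⟩

lemma IsInfSpec.mem_closure {Z : Set X} {x : X} (hx : IsInfSpec t Z x)
    (hZ : IsChain (· ⤳ ·) Z) (hne : Z.Nonempty) : x ∈ closure Z := by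
  have hg := (isIrreducible_of_isChain hZ hne).isGenericPoint_genericPoint_closure
  exact hg.specializes_iff_mem.1 ((isInfSpec_iff.1 hx).2 _ (isInfSpec_iff.1 hg.isInfSpec).1)

lemma exists_isSupSpec [CompactSpace X] (htot : ∀ x y : X, x ⤳ y ∨ y ⤳ x) {Z : Set X}
    (hne : Z.Nonempty) : ∃ b, IsSupSpec t Z b := by
  have hchain {S : Set X} : IsChain (· ⤳ ·) S := fun x _ y _ _ => htot x y
  set B := ⋂ z ∈ Z, closure {z}
  have hB : ∀ y, y ∈ B ↔ ∀ z ∈ Z, z ⤳ y := by simp [B, specializes_iff_mem_closure]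
  have hBne : B.Nonempty :=
    let ⟨y, _, hy⟩ := isCompact_univ.exists_mem_forall_specializes hchain (subset_univ Z) hne
    ⟨y, (hB y).2 hy⟩
  have hBcl : IsClosed B := isClosed_biInter fun _ _ => isClosed_closure
  have hg := (isIrreducible_of_isChain hchain hBne).isGenericPoint_genericPoint_closure
  rw [hBcl.closure_eq] at hg
  exact ⟨_, isSupSpec_iff.2 ⟨(hB _).1 hg.mem, fun c hc => hg.specializes ((hB c).2 hc)⟩⟩

end QuasiSober

lemma mem_patchClosure_of_neBot {Y : Set X} {x : X} {l : Filter X} [l.NeBot] (hY : Y ∈ l)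
    (hopen : ∀ U, IsCompact U → IsOpen U → x ∈ U → U ∈ l)
    (hclosed : ∀ V, IsCompact V → IsOpen V → x ∉ V → Vᶜ ∈ l) : x ∈ patchClosure t Y := by
  refine @mem_closure_of_tendsto X (patchOf t) X x Y id l _
    (tendsto_nhds_generateFrom_iff.2 fun s hs hxs => ?_) hY
  rcases hs with ⟨hc, ho⟩ | ⟨hc, ho⟩
  · exact hopen s hc ho hxs
  · simpa using hclosed sᶜ hc ho (not_not_intro hxs)

lemma exists_mem_diff_of_mem_patchClosure {Y U W : Set X} {x : X} (hx : x ∈ patchClosure t Y)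
    (hUc : IsCompact U) (hUo : IsOpen U) (hWc : IsCompact W) (hWo : IsOpen W) (hxU : x ∈ U)
    (hxW : x ∉ W) : ∃ y ∈ Y, y ∈ U ∧ y ∉ W := by
  have hopen : IsOpen[patchOf t] (U ∩ Wᶜ) :=
    @IsOpen.inter X (patchOf t) _ _ (isOpen_generateFrom_of_mem (.inl ⟨hUc, hUo⟩))
      (isOpen_generateFrom_of_mem (.inr (by simpa using ⟨hWc, hWo⟩)))
  obtain ⟨y, ⟨hyU, hyW⟩, hyY⟩ := (@mem_closure_iff X (patchOf t) _ _).1 hx _ hopen ⟨hxU, hxW⟩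
  exact ⟨y, hyY, hyU, hyW⟩

lemma IsSupSpec.mem_patchClosure (htot : ∀ x y : X, x ⤳ y ∨ y ⤳ x) {Y Z : Set X} {x : X}
    (hx : IsSupSpec t Z x) (hZY : Z ⊆ Y) (hne : Z.Nonempty) : x ∈ patchClosure t Y := by
  have hchain {S : Set X} : IsChain (· ⤳ ·) S := fun a _ b _ _ => htot a b
  have := finalSegments_neBot hchain hne
  obtain ⟨z₀, hz₀⟩ := hne
  rw [isSupSpec_iff] at hx
  refine mem_patchClosure_of_neBot (l := finalSegments (· ⤳ ·) Z)
    (mem_finalSegments hz₀ fun y hy => hZY hy.1)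
    (fun U _ hUo hxU => mem_finalSegments hz₀ fun y hy => (hx.1 y hy.1).mem_open hUo hxU)
    fun V hVc hVo hxV => ?_
  -- otherwise `Z ∩ V` is cofinal in `Z`, and an upper bound of it inside `V` bounds `Z`
  by_contra! hV
  have hcofinal : ∀ z ∈ Z, ∃ y ∈ Z ∩ V, z ⤳ y := fun z hz => by
    by_contra! h
    exact hV (mem_finalSegments hz fun y ⟨hyZ, hzy⟩ hyV => h y ⟨hyZ, hyV⟩ hzy)
  obtain ⟨y₀, hy₀, -⟩ := hcofinal z₀ hz₀
  obtain ⟨w, hwV, hw⟩ := hVc.exists_mem_forall_specializes hchain inter_subset_right ⟨y₀, hy₀⟩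
  have hwZ : ∀ z ∈ Z, z ⤳ w := fun z hz =>
    let ⟨y, hy, hzy⟩ := hcofinal z hz
    hzy.trans (hw y hy)
  exact hxV ((hx.2 w hwZ).mem_open hVo hwV)

lemma IsInfSpec.mem_patchClosure [QuasiSober X] (htot : ∀ x y : X, x ⤳ y ∨ y ⤳ x)
    {Y Z : Set X} {x : X} (hx : IsInfSpec t Z x) (hZY : Z ⊆ Y) (hne : Z.Nonempty) :
    x ∈ patchClosure t Y := by
  have hxZ := hx.mem_closure (fun a _ b _ _ => htot a b) hne
  have := finalSegments_neBot (r := Function.swap (· ⤳ ·)) (fun a _ b _ _ => htot b a) hne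
  obtain ⟨z₀, hz₀⟩ := hne
  rw [isInfSpec_iff] at hx
  refine mem_patchClosure_of_neBot (l := finalSegments (Function.swap (· ⤳ ·)) Z)
    (mem_finalSegments hz₀ fun y hy => hZY hy.1) (fun U _ hUo hxU => ?_)
    fun V _ hVo hxV => mem_finalSegments hz₀ fun y hy hyV => hxV ((hx.1 y hy.1).mem_open hVo hyV)
  obtain ⟨z, hzU, hzZ⟩ := mem_closure_iff.1 hxZ U hUo hxU
  exact mem_finalSegments hzZ fun y hy => hy.2.mem_open hUo hzU

lemma exists_isCompact_isOpen_of_not_specializes [PrespectralSpace X] {x y : X}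
    (h : ¬x ⤳ y) : ∃ U, IsCompact U ∧ IsOpen U ∧ y ∈ U ∧ x ∉ U := by
  obtain ⟨S, hSo, hyS, hxS⟩ := not_specializes_iff_exists_open.1 h
  obtain ⟨U, ⟨hUo, hUc⟩, hyU, hUS⟩ :=
    PrespectralSpace.isTopologicalBasis.exists_subset_of_mem_open hyS hSo
  exact ⟨U, hUc, hUo, hyU, fun hxU => hxS (hUS hxU)⟩

section Spectral

variable [CompactSpace X] [T0Space X] [QuasiSober X] [PrespectralSpace X]
  (htot : ∀ x y : X, x ⤳ y ∨ y ⤳ x)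
include htot

lemma exists_isCompact_isOpen_of_forall_not_isSupSpec {Y : Set X} {x : X}
    (hx : ∀ Z, Z ⊆ Y → Z.Nonempty → ¬IsSupSpec t Z x) :
    ∃ W, IsCompact W ∧ IsOpen W ∧ x ∉ W ∧ ∀ y ∈ Y, y ⤳ x → y ∈ W := by
  rcases {y ∈ Y | y ⤳ x}.eq_empty_or_nonempty with hempty | hne
  · refine ⟨∅, isCompact_empty, isOpen_empty, notMem_empty x, fun y hy hyx => ?_⟩
    exact hempty.subset ⟨hy, hyx⟩
  obtain ⟨s, hs⟩ := exists_isSupSpec htot hne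
  have hsx : s ⤳ x := (isSupSpec_iff.1 hs).2 x fun y hy => hy.2
  have hxs : ¬x ⤳ s := fun h => hx _ (sep_subset _ _) hne (by convert hs using 1; exact (h.antisymm hsx).eq)
  obtain ⟨W, hWc, hWo, hsW, hxW⟩ := exists_isCompact_isOpen_of_not_specializes hxs
  exact ⟨W, hWc, hWo, hxW, fun y hy hyx => ((isSupSpec_iff.1 hs).1 y ⟨hy, hyx⟩).mem_open hWo hsW⟩

lemma exists_isCompact_isOpen_of_forall_not_isInfSpec {Y : Set X} {x : X}
    (hx : ∀ Z, Z ⊆ Y → Z.Nonempty → ¬IsInfSpec t Z x) :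
    ∃ U, IsCompact U ∧ IsOpen U ∧ x ∈ U ∧ ∀ y ∈ Y, x ⤳ y → y ∉ U := by
  rcases {y ∈ Y | x ⤳ y}.eq_empty_or_nonempty with hempty | hne
  · refine ⟨univ, isCompact_univ, isOpen_univ, mem_univ x, fun y hy hxy _ => ?_⟩
    exact hempty.subset ⟨hy, hxy⟩
  obtain ⟨i, hi⟩ := exists_isInfSpec (fun a _ b _ _ => htot a b) hne
  have hxi : x ⤳ i := (isInfSpec_iff.1 hi).2 x fun y hy => hy.2
  have hix : ¬i ⤳ x := fun h => hx _ (sep_subset _ _) hne (by convert hi using 1; exact (hxi.antisymm h).eq)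
  obtain ⟨U, hUc, hUo, hxU, hiU⟩ := exists_isCompact_isOpen_of_not_specializes hix
  exact ⟨U, hUc, hUo, hxU, fun y hy hxy hyU =>
    hiU (((isInfSpec_iff.1 hi).1 y ⟨hy, hxy⟩).mem_open hUo hyU)⟩

theorem patchClosure_eq (Y : Set X) :
    patchClosure t Y =
      {x | ∃ Z : Set X, Z ⊆ Y ∧ Z.Nonempty ∧ IsSupSpec t Z x} ∪
        {x | ∃ Z : Set X, Z ⊆ Y ∧ Z.Nonempty ∧ IsInfSpec t Z x} := by
  refine subset_antisymm (fun x hx => ?_) <| union_subset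
    (fun _ ⟨_, hZY, hne, hx⟩ => hx.mem_patchClosure htot hZY hne)
    (fun _ ⟨_, hZY, hne, hx⟩ => hx.mem_patchClosure htot hZY hne)
  by_contra h
  simp only [mem_union, mem_ofPred_eq, not_or, not_exists, not_and] at h
  obtain ⟨W, hWc, hWo, hxW, hYW⟩ := exists_isCompact_isOpen_of_forall_not_isSupSpec htot h.1
  obtain ⟨U, hUc, hUo, hxU, hYU⟩ := exists_isCompact_isOpen_of_forall_not_isInfSpec htot h.2
  obtain ⟨y, hyY, hyU, hyW⟩ := exists_mem_diff_of_mem_patchClosure hx hUc hUo hWc hWo hxU hxW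
  rcases htot y x with hyx | hxy
  · exact hyW (hYW y hyY hyx)
  · exact hYU y hyY hxy hyU

theorem isClosed_patchOf_iff (Y : Set X) :
    IsClosed[patchOf t] Y ↔ ∀ Z : Set X, Z ⊆ Y → Z.Nonempty →
      (∃ b ∈ Y, IsSupSpec t Z b) ∧ (∃ b ∈ Y, IsInfSpec t Z b) := by
  rw [← @closure_subset_iff_isClosed X (patchOf t), ← patchClosure, patchClosure_eq htot,
    union_subset_iff]
  constructor
  · rintro ⟨hsup, hinf⟩ Z hZY hne
    obtain ⟨b, hb⟩ := exists_isSupSpec htot hne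
    obtain ⟨c, hc⟩ := exists_isInfSpec (fun a _ b _ _ => htot a b) hne
    exact ⟨⟨b, hsup ⟨Z, hZY, hne, hb⟩, hb⟩, ⟨c, hinf ⟨Z, hZY, hne, hc⟩, hc⟩⟩
  · intro h
    refine ⟨fun x ⟨Z, hZY, hne, hx⟩ => ?_, fun x ⟨Z, hZY, hne, hx⟩ => ?_⟩
    · obtain ⟨b, hbY, hb⟩ := (h Z hZY hne).1
      exact hx.eq hb ▸ hbY
    · obtain ⟨b, hbY, hb⟩ := (h Z hZY hne).2
      exact hx.eq hb ▸ hbY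

end Spectral

end Specialization

theorem stmt2_general {X : Type*} [t : TopologicalSpace X] (hX : IsSpectral X t)
    (htot : ∀ x y : X, specLE t x y ∨ specLE t y x)
    (Y : Set X) :
    patchClosure t Y =
      {x | ∃ Z : Set X, Z ⊆ Y ∧ Z.Nonempty ∧ IsSupSpec t Z x} ∪
        {x | ∃ Z : Set X, Z ⊆ Y ∧ Z.Nonempty ∧ IsInfSpec t Z x} ∧
    (@IsClosed X (patchOf t) Y ↔
      ∀ Z : Set X, Z ⊆ Y → Z.Nonempty →
        (∃ b ∈ Y, IsSupSpec t Z b) ∧ (∃ b ∈ Y, IsInfSpec t Z b)) := by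
  obtain ⟨_, _, _, B, hB, -, hbasis⟩ := hX
  have : PrespectralSpace X := .of_isTopologicalBasis hbasis fun s hs => (hB s hs).1
  simp only [specLE_iff_specializes] at htot
  exact ⟨patchClosure_eq htot Y, isClosed_patchOf_iff htot Y⟩

theorem stmt2 {X : Type*} [t : TopologicalSpace X] (hX : IsSpectral X t)
    (htot : ∀ x y : X, specLE t x y ∨ specLE t y x)
    (Y : Set X) (hY : Y.Nonempty) :
    patchClosure t Y =
      {x | ∃ Z : Set X, Z ⊆ Y ∧ Z.Nonempty ∧ IsSupSpec t Z x} ∪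
        {x | ∃ Z : Set X, Z ⊆ Y ∧ Z.Nonempty ∧ IsInfSpec t Z x} ∧
    (@IsClosed X (patchOf t) Y ↔
      ∀ Z : Set X, Z ⊆ Y → Z.Nonempty →
        (∃ b ∈ Y, IsSupSpec t Z b) ∧ (∃ b ∈ Y, IsInfSpec t Z b)) :=
  stmt2_general (t := t) hX htot Y
end

section
/- Let V be a valuation domain and P a branched prime ideal of V, i.e., there exists a P-primary ideal distinct from P. Then the closure of the set P(P) of P-primary ideals of V in the constructible topology of the space of ideals of V equals P(P) together with the prime ideal Q of V immediately below P (the largest prime properly contained in P). -/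
/-!
Zariski-open sets of ideals are upward closed, so every patch-neighbourhood of the prime `Q`
contains a set `{J | Q ≤ J, a ∉ J}` with `a ∉ Q` (compactness reduces the finitely many
conditions coming from a compact open set to one, via a product). For `a ∈ P \ Q` the ideal
`(a²)V_P ∩ V` is `P`-primary, since no prime lies strictly between `Q` and `P` and hence
`rad (a²) = P`, and it misses `a`; so `Q` lies in the closure. Conversely an ideal `I` outside
`P(P) ∪ {Q}` is separated from `P(P)` by a patch-open set: `{J | g ∈ J}` for `g ∈ I \ P`,
`{J | a ∉ J}` for `a ∈ Q \ I`, and otherwise `Q < I ≤ P` forces `rad I = P`, so `I` fails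
to be primary at some `xy ∈ I` with `x ∉ I`, `y ∉ P`, and `{J | xy ∈ J, x ∉ J}` contains
no `P`-primary ideal.
-/


open Set TopologicalSpace

/-- The Zariski topology on the set of `R`-submodules of `M`, generated by the sets
`B(x₁,…,xₙ) = {N | x₁,…,xₙ ∈ N}`. -/
def zarModTop (R M : Type*) [Semiring R] [AddCommMonoid M] [Module R M] :
    TopologicalSpace (Submodule R M) :=
  TopologicalSpace.generateFrom
    {U : Set (Submodule R M) | ∃ F : Set M, F.Finite ∧ U = {N : Submodule R M | F ⊆ (N : Set M)}}

/-- The Zariski topology on the set of ideals of `R`. -/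
def zarIdealTop (R : Type*) [CommRing R] : TopologicalSpace (Ideal R) :=
  TopologicalSpace.generateFrom
    {U : Set (Ideal R) | ∃ F : Set R, F.Finite ∧ U = {I : Ideal R | F ⊆ (I : Set R)}}

open Topology

section ZariskiTopology

variable {R : Type*} [CommRing R]

theorem isUpperSet_of_isOpen_zarIdealTop {U : Set (Ideal R)} (hU : IsOpen[zarIdealTop R] U) :
    IsUpperSet U := by
  induction hU with
  | basic s hs =>
    obtain ⟨F, -, rfl⟩ := hs
    exact fun I J hIJ hI => hI.trans (SetLike.coe_subset_coe.mpr hIJ)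
  | univ => exact isUpperSet_univ
  | inter s t _ _ hs ht => exact hs.inter ht
  | sUnion S _ hS => exact isUpperSet_sUnion hS

theorem isCompact_of_isLeast {X : Type*} [TopologicalSpace X] [Preorder X]
    (hX : ∀ U : Set X, IsOpen U → IsUpperSet U) {s : Set X} {x : X} (hx : IsLeast s x) :
    IsCompact s := by
  refine isCompact_of_finite_subcover fun U hUo hsU => ?_
  obtain ⟨i, hi⟩ := mem_iUnion.mp (hsU hx.1)
  exact ⟨{i}, fun y hy => by simpa using hX _ (hUo i) (hx.2 hy) hi⟩

theorem isCompact_isOpen_zarIdealTop_setOf_mem (a : R) :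
    @IsCompact _ (zarIdealTop R) {I : Ideal R | a ∈ I} ∧
      IsOpen[zarIdealTop R] {I : Ideal R | a ∈ I} := by
  let := zarIdealTop R
  refine ⟨isCompact_of_isLeast (fun _ => isUpperSet_of_isOpen_zarIdealTop)
    (x := Ideal.span {a}) ⟨Ideal.mem_span_singleton_self a, fun I hI => ?_⟩,
    GenerateOpen.basic _ ⟨{a}, finite_singleton a, by simp⟩⟩
  exact (Ideal.span_singleton_le_iff_mem I).mpr hI

theorem isOpen_patchOf_setOf_mem (a : R) :
    IsOpen[patchOf (zarIdealTop R)] {I : Ideal R | a ∈ I} :=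
  GenerateOpen.basic _ (Or.inl (isCompact_isOpen_zarIdealTop_setOf_mem a))

theorem isOpen_patchOf_setOf_notMem (a : R) :
    IsOpen[patchOf (zarIdealTop R)] {I : Ideal R | a ∉ I} :=
  GenerateOpen.basic _ (Or.inr (by
    simp only [compl_ofPred, not_not]
    exact isCompact_isOpen_zarIdealTop_setOf_mem a))

/-- The sets `{J | a ∈ J}` with `a ∉ Q` form a directed open cover of `W`. -/
theorem exists_notMem_forall_mem_of_isCompact_isOpen {Q : Ideal R} [Q.IsPrime]
    {W : Set (Ideal R)} (hWc : @IsCompact _ (zarIdealTop R) W) (hWo : IsOpen[zarIdealTop R] W)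
    (hQW : Q ∉ W) : ∃ a ∉ Q, ∀ J ∈ W, a ∈ J := by
  let := zarIdealTop R
  have hcover : W ⊆ ⋃ s : Q.primeCompl, {J : Ideal R | (s : R) ∈ J} := by
    intro I hI
    obtain ⟨g, hgI, hgQ⟩ := SetLike.not_le_iff_exists.mp
      fun hIQ => hQW (isUpperSet_of_isOpen_zarIdealTop hWo hIQ hI)
    exact mem_iUnion.mpr ⟨⟨g, hgQ⟩, hgI⟩
  obtain ⟨⟨a, ha⟩, hWa⟩ :=
    hWc.elim_directed_cover (fun s : Q.primeCompl => {J : Ideal R | (s : R) ∈ J})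
    (fun s => (isCompact_isOpen_zarIdealTop_setOf_mem (s : R)).2) hcover
    fun s t => ⟨s * t, fun J h => J.mul_mem_right _ h, fun J h => J.mul_mem_left (s : R) h⟩
  exact ⟨a, ha, hWa⟩

theorem exists_notMem_of_isOpen_patchOf {Q : Ideal R} [Q.IsPrime] {U : Set (Ideal R)}
    (hU : IsOpen[patchOf (zarIdealTop R)] U) (hQU : Q ∈ U) :
    ∃ a ∉ Q, ∀ J : Ideal R, Q ≤ J → a ∉ J → J ∈ U := by
  have h1 : (1 : R) ∉ Q := (Ideal.ne_top_iff_one Q).mp Ideal.IsPrime.ne_top'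
  induction hU with
  | basic s hs =>
    rcases hs with ⟨-, hso⟩ | ⟨hsc, hso⟩
    · exact ⟨1, h1, fun J hQJ _ => isUpperSet_of_isOpen_zarIdealTop hso hQJ hQU⟩
    · obtain ⟨a, ha, hsa⟩ :=
        exists_notMem_forall_mem_of_isCompact_isOpen hsc hso (not_not.mpr hQU)
      exact ⟨a, ha, fun J _ hJa => not_not.mp fun hJ => hJa (hsa J hJ)⟩
  | univ => exact ⟨1, h1, fun _ _ _ => trivial⟩
  | inter s t _ _ hs ht =>
    obtain ⟨a, ha, has⟩ := hs hQU.1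
    obtain ⟨b, hb, hbt⟩ := ht hQU.2
    refine ⟨a * b, fun hab => (Ideal.IsPrime.mem_or_mem ‹_› hab).elim ha hb,
      fun J hQJ hJ => ⟨has J hQJ fun h => hJ (J.mul_mem_right b h),
        hbt J hQJ fun h => hJ (J.mul_mem_left a h)⟩⟩
  | sUnion S _ hS =>
    obtain ⟨s, hsS, hQs⟩ := hQU
    obtain ⟨a, ha, has⟩ := hS s hsS hQs
    exact ⟨a, ha, fun J hQJ hJ => ⟨s, hsS, has J hQJ hJ⟩⟩

theorem mem_closure_patchOf_of_forall_notMem {Q : Ideal R} [Q.IsPrime] {S : Set (Ideal R)}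
    (h : ∀ a ∉ Q, ∃ J ∈ S, Q ≤ J ∧ a ∉ J) :
    Q ∈ closure[patchOf (zarIdealTop R)] S := by
  let := patchOf (zarIdealTop R)
  refine mem_closure_iff.mpr fun U hU hQU => ?_
  obtain ⟨a, ha, haU⟩ := exists_notMem_of_isOpen_patchOf hU hQU
  obtain ⟨J, hJS, hQJ, haJ⟩ := h a ha
  exact ⟨J, haU J hQJ haJ, hJS⟩

end ZariskiTopology

namespace Ideal

section Saturation

variable {R : Type*} [CommRing R] {P : Ideal R} [P.IsPrime]

def saturationAt (I P : Ideal R) [P.IsPrime] : Ideal R :=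
  (I.map (algebraMap R (Localization.AtPrime P))).comap (algebraMap R (Localization.AtPrime P))

theorem mem_saturationAt {I : Ideal R} {x : R} :
    x ∈ I.saturationAt P ↔ ∃ s ∉ P, s * x ∈ I :=
  (IsLocalization.algebraMap_mem_map_algebraMap_iff P.primeCompl _ I x).trans
    (by simp [mem_primeCompl_iff])

theorem le_saturationAt (I : Ideal R) : I ≤ I.saturationAt P :=
  fun x hx => mem_saturationAt.mpr ⟨1, (ne_top_iff_one P).mp IsPrime.ne_top', by simpa using hx⟩

theorem radical_saturationAt {I : Ideal R} (hI : I.radical = P) :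
    (I.saturationAt P).radical = P := by
  refine le_antisymm (fun x ⟨n, hxn⟩ => ?_) (hI.ge.trans (radical_mono (le_saturationAt I)))
  obtain ⟨s, hs, hsx⟩ := mem_saturationAt.mp hxn
  have : s * x ^ n ∈ P := hI ▸ le_radical hsx
  exact IsPrime.mem_of_pow_mem ‹_› n (((‹P.IsPrime›).mem_or_mem this).resolve_left hs)

theorem isPrimary_saturationAt {I : Ideal R} (hI : I.radical = P) :
    (I.saturationAt P).IsPrimary := by
  refine isPrimary_iff.mpr ⟨fun htop => (‹P.IsPrime›).ne_top ?_, fun {x y} hxy => ?_⟩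
  · rw [← radical_saturationAt hI, htop, radical_top]
  rw [radical_saturationAt hI]
  refine or_iff_not_imp_right.mpr fun hy => ?_
  obtain ⟨s, hs, hsxy⟩ := mem_saturationAt.mp hxy
  exact mem_saturationAt.mpr ⟨s * y, fun h => ((‹P.IsPrime›).mem_or_mem h).elim hs hy,
    by rwa [mul_assoc, mul_comm y]⟩

/-- Cancelling `a` in `s * a = a ^ 2 * c` would put `s` in `P`. -/
theorem notMem_saturationAt_span_sq [IsDomain R] {a : R} (ha : a ∈ P) (ha0 : a ≠ 0) :
    a ∉ (span {a ^ 2}).saturationAt P := by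
  intro h
  obtain ⟨s, hs, hsa⟩ := mem_saturationAt.mp h
  obtain ⟨c, hc⟩ := mem_span_singleton'.mp hsa
  have : s = c * a := mul_right_cancel₀ ha0 (by rw [← hc]; ring)
  exact hs (this ▸ P.mul_mem_left c ha)

end Saturation

section ValuationRing

variable {V : Type*} [CommRing V] [PreValuationRing V]

theorem isPrime_radical_of_ne_top {I : Ideal V} (hI : I ≠ ⊤) : I.radical.IsPrime := by
  refine ⟨by rwa [Ne, radical_eq_top], fun {x y} ⟨n, hxy⟩ => ?_⟩
  obtain ⟨c, rfl | rfl⟩ := PreValuationRing.cond x y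
  · refine Or.inr ⟨2 * n, ?_⟩
    rw [show (x * c) ^ (2 * n) = (x * (x * c)) ^ n * c ^ n by ring]
    exact I.mul_mem_right _ hxy
  · refine Or.inl ⟨2 * n, ?_⟩
    rw [show (y * c) ^ (2 * n) = (y * c * y) ^ n * c ^ n by ring]
    exact I.mul_mem_right _ hxy

variable {P Q : Ideal V}

theorem le_of_lt_radical [Q.IsPrime] {J : Ideal V} (h : Q < J.radical) : Q ≤ J :=
  (total_of (· ≤ ·) J Q).resolve_left
    fun hJQ => h.not_ge ((‹Q.IsPrime›).radical_le_iff.mpr hJQ)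

theorem le_radical_of_not_le (himm : ∀ P' : Ideal V, P'.IsPrime → Q < P' → P ≤ P')
    {I : Ideal V} (hI : I ≠ ⊤) (hIQ : ¬ I ≤ Q) : P ≤ I.radical :=
  himm _ (isPrime_radical_of_ne_top hI) <|
    lt_of_le_not_ge (((total_of (· ≤ ·) I Q).resolve_left hIQ).trans le_radical)
      fun h => hIQ (le_radical.trans h)

end ValuationRing

end Ideal

section ValuationDomain

open Ideal

variable {V : Type*} [CommRing V] [IsDomain V] [ValuationRing V] {P Q : Ideal V}

theorem exists_isPrimary_radical_eq_notMem [P.IsPrime] [Q.IsPrime]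
    (himm : ∀ P' : Ideal V, P'.IsPrime → Q < P' → P ≤ P') {a : V} (ha : a ∉ Q) :
    ∃ J : Ideal V, (J.IsPrimary ∧ J.radical = P) ∧ a ∉ J := by
  by_cases haP : a ∈ P
  swap
  · exact ⟨P, ⟨IsPrime.isPrimary ‹_›, IsPrime.radical ‹_›⟩, haP⟩
  have hspan : span {a ^ 2} ≤ P :=
    span_le.mpr (singleton_subset_iff.mpr (P.pow_mem_of_mem haP 2 two_pos))
  have hrad : (span {a ^ 2}).radical = P := by
    refine le_antisymm ((IsPrime.radical_le_iff ‹_›).mpr hspan) (le_radical_of_not_le himm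
      (ne_top_of_le_ne_top IsPrime.ne_top' hspan) fun h => ha ?_)
    exact IsPrime.mem_of_pow_mem ‹_› 2 (h (mem_span_singleton_self _))
  exact ⟨_, ⟨isPrimary_saturationAt hrad, radical_saturationAt hrad⟩,
    notMem_saturationAt_span_sq haP fun h0 => ha (h0 ▸ Q.zero_mem)⟩

theorem exists_isOpen_patchOf_forall_not_isPrimary [P.IsPrime] [Q.IsPrime] (hQP : Q < P)
    (himm : ∀ P' : Ideal V, P'.IsPrime → Q < P' → P ≤ P') {I : Ideal V}
    (hI : ¬ (I.IsPrimary ∧ I.radical = P)) (hIQ : I ≠ Q) :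
    ∃ U, IsOpen[patchOf (zarIdealTop V)] U ∧ I ∈ U ∧
      ∀ J ∈ U, ¬ (J.IsPrimary ∧ J.radical = P) := by
  let := patchOf (zarIdealTop V)
  by_cases hIP : I ≤ P
  swap
  · obtain ⟨g, hgI, hgP⟩ := SetLike.not_le_iff_exists.mp hIP
    exact ⟨{J | g ∈ J}, isOpen_patchOf_setOf_mem g, hgI,
      fun J hgJ hJ => hgP (hJ.2 ▸ le_radical hgJ)⟩
  by_cases hQI : Q ≤ I
  swap
  · obtain ⟨a, haQ, haI⟩ := SetLike.not_le_iff_exists.mp hQI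
    exact ⟨{J | a ∉ J}, isOpen_patchOf_setOf_notMem a, haI,
      fun J haJ hJ => haJ (le_of_lt_radical (hJ.2 ▸ hQP) haQ)⟩
  have hrad : I.radical = P := le_antisymm ((IsPrime.radical_le_iff ‹_›).mpr hIP)
    (le_radical_of_not_le himm (ne_top_of_le_ne_top IsPrime.ne_top' hIP)
      fun h => hIQ (le_antisymm h hQI))
  -- a failure of primarity of `I` is a patch-open condition that no `P`-primary ideal satisfies
  obtain ⟨x, y, hxy, hx, hy⟩ : ∃ x y, x * y ∈ I ∧ x ∉ I ∧ y ∉ P := by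
    have hnp : ¬ I.IsPrimary := fun h => hI ⟨h, hrad⟩
    simp only [isPrimary_iff, not_and, not_forall, not_or, exists_prop, hrad] at hnp
    exact hnp (ne_top_of_le_ne_top IsPrime.ne_top' hIP)
  exact ⟨{J | x * y ∈ J} ∩ {J | x ∉ J},
    (isOpen_patchOf_setOf_mem _).inter (isOpen_patchOf_setOf_notMem _), ⟨hxy, hx⟩,
    fun J ⟨hxyJ, hxJ⟩ hJ => hy (hJ.2 ▸ ((isPrimary_iff.mp hJ.1).2 hxyJ).resolve_left hxJ)⟩

end ValuationDomain

theorem stmt15_general (V : Type*) [CommRing V] [IsDomain V] [ValuationRing V]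
    (P : Ideal V) (hP : P.IsPrime)
    (Q : Ideal V) (hQ : Q.IsPrime) (hQP : Q < P)
    (himm : ∀ P' : Ideal V, P'.IsPrime → Q < P' → P ≤ P') :
    @closure (Ideal V) (patchOf (zarIdealTop V))
        {I : Ideal V | I.IsPrimary ∧ I.radical = P} =
      {I : Ideal V | I.IsPrimary ∧ I.radical = P} ∪ {Q} := by
  let := patchOf (zarIdealTop V)
  refine Subset.antisymm (fun I hI => ?_) (union_subset subset_closure ?_)
  · by_contra hIS
    obtain ⟨U, hUo, hIU, hUS⟩ := exists_isOpen_patchOf_forall_not_isPrimary hQP himm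
      (fun h => hIS (Or.inl h)) (fun h => hIS (Or.inr h))
    obtain ⟨J, hJU, hJS⟩ := mem_closure_iff.mp hI U hUo hIU
    exact hUS J hJU hJS
  · refine singleton_subset_iff.mpr (mem_closure_patchOf_of_forall_notMem fun a ha => ?_)
    obtain ⟨J, hJ, haJ⟩ := exists_isPrimary_radical_eq_notMem himm ha
    exact ⟨J, hJ, Ideal.le_of_lt_radical (hJ.2 ▸ hQP), haJ⟩

theorem stmt15 (V : Type*) [CommRing V] [IsDomain V] [ValuationRing V]
    (P : Ideal V) (hP : P.IsPrime)
    (hbr : ∃ Q₀ : Ideal V, Q₀.IsPrimary ∧ Q₀.radical = P ∧ Q₀ ≠ P)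
    (Q : Ideal V) (hQ : Q.IsPrime) (hQP : Q < P)
    (himm : ∀ P' : Ideal V, P'.IsPrime → Q < P' → P ≤ P') :
    @closure (Ideal V) (patchOf (zarIdealTop V))
        {I : Ideal V | I.IsPrimary ∧ I.radical = P} =
      {I : Ideal V | I.IsPrimary ∧ I.radical = P} ∪ {Q} :=
  stmt15_general V P hP Q hQ hQP himm
end
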